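/- arXiv:2502.01914 — 10 statements merged into one kernel-verified Lean document; each statement's English description precedes it below -/
import Mathlib

section
/- In a star graph b-matching game, if an imputation p satisfies p(v_i) ≤ ν(G) − ν(G \ {v_i}) for every leaf v_i, then p is in the core. -/
/-- The set of achievable `b`-matching weights for a coalition `S` in a star graph:
center `u` is `none`, leaves `v_i` are `some i`; `w i` is the weight of edge `(u, v_i)`,
`b i` the capacity of leaf `v_i`, and `B` the capacity of the center. -/
def starNuSet {n : ℕ} (w : Fin n → ℝ) (b : Fin n → ℕ) (B : ℕ)
    (S : Finset (Option (Fin n))) : Set ℝ :=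
  {t | ∃ x : Fin n → ℕ, (∀ i, x i ≤ b i) ∧ (∀ i, some i ∉ S → x i = 0) ∧
    (none ∉ S → ∀ i, x i = 0) ∧ (∑ i, x i) ≤ B ∧ t = ∑ i, (x i : ℝ) * w i}

/-- Intermediate value property for integer boxes: any value between the sums of the
lower and upper bounds is achieved as a sum of a point in the box. -/
lemma box_ivt : ∀ (n : ℕ) (L H : Fin n → ℕ), (∀ j, L j ≤ H j) → ∀ σ : ℕ,
    ∑ j, L j ≤ σ → σ ≤ ∑ j, H j →
    ∃ y : Fin n → ℕ, (∀ j, L j ≤ y j) ∧ (∀ j, y j ≤ H j) ∧ ∑ j, y j = σ := by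
  intro n
  induction n with
  | zero =>
    intro L H _ σ h1 h2
    simp only [Finset.univ_eq_empty, Finset.sum_empty] at h1 h2
    exact ⟨0, fun j => j.elim0, fun j => j.elim0, by simp; omega⟩
  | succ m ih =>
    intro L H hLH σ h1 h2
    rw [Fin.sum_univ_succ] at h1 h2
    have hLHs : ∑ j : Fin m, L j.succ ≤ ∑ j : Fin m, H j.succ :=
      Finset.sum_le_sum fun j _ => hLH j.succ
    have hLH0 := hLH 0
    set y0 := max (L 0) (σ - ∑ j : Fin m, H j.succ) with hy0
    obtain ⟨y', hL', hH', hs'⟩ := ih (fun j => L j.succ) (fun j => H j.succ)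
      (fun j => hLH j.succ) (σ - y0)
      (by show ∑ j : Fin m, L j.succ ≤ σ - y0; omega)
      (by show σ - y0 ≤ ∑ j : Fin m, H j.succ; omega)
    refine ⟨Fin.cons y0 y', ?_, ?_, ?_⟩
    · intro j
      refine Fin.cases ?_ ?_ j
      · simp [hy0]
      · intro i; simpa using hL' i
    · intro j
      refine Fin.cases ?_ ?_ j
      · simp only [Fin.cons_zero]; omega
      · intro i; simpa using hH' i
    · rw [Fin.sum_univ_succ]
      simp only [Fin.cons_zero, Fin.cons_succ]
      omega

/-- The exchange (submodularity) step: removing a leaf from a smaller coalition costs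
at least as much as removing it from the grand coalition. -/
lemma star_step {n : ℕ} (w : Fin n → ℝ) (b : Fin n → ℕ) (B : ℕ)
    (ν : Finset (Option (Fin n)) → ℝ)
    (hν : ∀ S, IsGreatest (starNuSet w b B S) (ν S))
    (S : Finset (Option (Fin n))) (hnone : none ∈ S) (t : Fin n) (ht : some t ∈ S) :
    ν (S.erase (some t)) + ν Finset.univ ≤ ν S + ν (Finset.univ.erase (some t)) := by
  obtain ⟨y, hyb, hyS, -, hyB, hyval⟩ := (hν (S.erase (some t))).1
  obtain ⟨z, hzb, -, -, hzB, hzval⟩ := (hν Finset.univ).1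
  have hyt : y t = 0 := hyS t (by simp)
  have hyS' : ∀ j, some j ∉ S → y j = 0 := fun j hj =>
    hyS j (fun h => hj (Finset.mem_of_mem_erase h))
  set a : Fin n → ℕ := fun j => y j + z j with ha
  set H : Fin n → ℕ := fun j => min (if some j ∈ S then b j else 0) (a j) with hH
  set L : Fin n → ℕ := fun j => a j - min (if j = t then 0 else b j) (a j) with hL
  have hLH : ∀ j, L j ≤ H j := by
    intro j
    have h1 := hyb j; have h2 := hzb j
    by_cases hjt : j = t
    · subst hjt
      simp only [hL, hH, ha, if_pos rfl, if_pos ht]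
      omega
    · by_cases hjS : some j ∈ S
      · simp only [hL, hH, ha, if_neg hjt, if_pos hjS]; omega
      · have hy0 : y j = 0 := hyS' j hjS
        simp only [hL, hH, ha, if_neg hjt, if_neg hjS]
        omega
  have hLz : ∀ j, L j ≤ z j := by
    intro j
    have h1 := hyb j
    by_cases hjt : j = t
    · subst hjt; simp only [hL, ha, if_pos rfl]; omega
    · simp only [hL, ha, if_neg hjt]; omega
  have hyH : ∀ j, y j ≤ H j := by
    intro j
    have h1 := hyb j
    by_cases hjt : j = t
    · subst hjt; simp only [hH, ha, hyt]; omega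
    · by_cases hjS : some j ∈ S
      · simp only [hH, ha, if_pos hjS]; omega
      · have hy0 : y j = 0 := hyS' j hjS
        simp only [hH, ha, hy0]; omega
  have hsLz : ∑ j, L j ≤ ∑ j, z j := Finset.sum_le_sum fun j _ => hLz j
  have hsLH : ∑ j, L j ≤ ∑ j, H j := Finset.sum_le_sum fun j _ => hLH j
  have hsyH : ∑ j, y j ≤ ∑ j, H j := Finset.sum_le_sum fun j _ => hyH j
  have hsa : ∑ j, a j = ∑ j, y j + ∑ j, z j := by
    simp only [ha]; rw [Finset.sum_add_distrib]
  set σ := max (∑ j, L j) (∑ j, a j - B) with hσ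
  obtain ⟨x, hLx, hxH, hxs⟩ := box_ivt n L H hLH σ (by omega) (by omega)
  have hxa : ∀ j, x j ≤ a j := fun j => (hxH j).trans (min_le_right _ _)
  set x' : Fin n → ℕ := fun j => a j - x j with hx'
  have hsx' : ∑ j, x' j + σ = ∑ j, a j := by
    rw [← hxs, ← Finset.sum_add_distrib]
    exact Finset.sum_congr rfl fun j _ => by have := hxa j; simp only [hx']; omega
  -- x is feasible for S
  have hmem1 : (∑ j, (x j : ℝ) * w j) ∈ starNuSet w b B S := by
    refine ⟨x, ?_, ?_, fun h => absurd hnone h, ?_, rfl⟩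
    · intro j
      refine (hxH j).trans ((min_le_left _ _).trans ?_)
      split <;> omega
    · intro j hj
      have := hxH j
      simp only [hH, if_neg hj] at this
      omega
    · rw [hxs]; omega
  -- x' is feasible for univ.erase (some t)
  have hmem2 : (∑ j, (x' j : ℝ) * w j) ∈ starNuSet w b B (Finset.univ.erase (some t)) := by
    refine ⟨x', ?_, ?_, ?_, ?_, rfl⟩
    · intro j
      have h1 := hLx j
      have h2 := hzb j
      have h3 := hyb j
      by_cases hjt : j = t
      · subst hjt
        have hLt : L j = a j := by simp [hL]
        rw [hLt] at h1
        simp only [hx']; omega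
      · have hLj : L j = a j - min (b j) (a j) := by simp [hL, if_neg hjt]
        rw [hLj] at h1
        simp only [hx']; omega
    · intro j hj
      have hjt : j = t := by
        by_contra hne
        exact hj (Finset.mem_erase.2 ⟨by simpa using hne, Finset.mem_univ _⟩)
      subst hjt
      have h1 := hLx j
      have h2 := hxa j
      have hLt : L j = a j := by simp [hL]
      rw [hLt] at h1
      simp only [hx']; omega
    · intro h
      exact absurd (Finset.mem_erase.2 ⟨by simp, Finset.mem_univ _⟩) h
    · omega
  have hb1 : (∑ j, (x j : ℝ) * w j) ≤ ν S := (hν S).2 hmem1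
  have hb2 : (∑ j, (x' j : ℝ) * w j) ≤ ν (Finset.univ.erase (some t)) := (hν _).2 hmem2
  have hkey : (∑ j, (x j : ℝ) * w j) + (∑ j, (x' j : ℝ) * w j)
      = ν (S.erase (some t)) + ν Finset.univ := by
    rw [hyval, hzval, ← Finset.sum_add_distrib, ← Finset.sum_add_distrib]
    refine Finset.sum_congr rfl fun j _ => ?_
    have h1 := hxa j
    have : (x' j : ℝ) = (a j : ℝ) - (x j : ℝ) := by
      simp only [hx']
      push_cast [Nat.cast_sub h1]
      ring
    rw [this]
    have : ((a j : ℕ) : ℝ) = (y j : ℝ) + (z j : ℝ) := by simp [ha]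
    rw [this]; ring
  linarith

/-- Iterating the exchange step over a set of removed leaves. -/
lemma star_down {n : ℕ} (w : Fin n → ℝ) (b : Fin n → ℕ) (B : ℕ)
    (ν : Finset (Option (Fin n)) → ℝ)
    (hν : ∀ S, IsGreatest (starNuSet w b B S) (ν S)) :
    ∀ C : Finset (Fin n),
      ν (Finset.univ \ C.image some) +
        ∑ i ∈ C, (ν Finset.univ - ν (Finset.univ.erase (some i))) ≤ ν Finset.univ := by
  intro C
  induction C using Finset.induction_on with
  | empty => simp
  | @insert a s htC ih =>
    have hset : (Finset.univ \ (insert a s).image some)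
        = (Finset.univ \ s.image some).erase (some a) := by
      rw [Finset.image_insert, Finset.sdiff_insert]
    have hnone : none ∈ Finset.univ \ s.image some := by
      simp [Finset.mem_sdiff, Finset.mem_image]
    have hta : some a ∈ Finset.univ \ s.image some := by
      simp only [Finset.mem_sdiff, Finset.mem_univ, true_and, Finset.mem_image]
      rintro ⟨i, hi, hiv⟩
      rw [Option.some_inj] at hiv
      subst hiv
      exact htC hi
    have hstep := star_step w b B ν hν (Finset.univ \ s.image some) hnone a hta
    rw [hset, Finset.sum_insert htC]
    linarith

/-- In a star graph b-matching game, if an imputation pays each leaf at most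
its marginal utility, then the imputation is in the core. -/
theorem stmt1 {n : ℕ} (w : Fin n → ℝ) (hw : ∀ i, 0 ≤ w i)
    (b : Fin n → ℕ) (B : ℕ) (ν : Finset (Option (Fin n)) → ℝ)
    (hν : ∀ S, IsGreatest (starNuSet w b B S) (ν S))
    (p : Option (Fin n) → ℝ) (hp : ∀ v, 0 ≤ p v)
    (himp : ∑ v, p v = ν Finset.univ)
    (hleaf : ∀ i : Fin n, p (some i) ≤ ν Finset.univ - ν (Finset.univ.erase (some i))) :
    ∀ S : Finset (Option (Fin n)), ν S ≤ ∑ v ∈ S, p v := by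
  intro S
  by_cases hn : none ∈ S
  · classical
    set C := Finset.univ.filter (fun i : Fin n => some i ∉ S) with hC
    have hSC : Finset.univ \ C.image some = S := by
      ext v
      cases v with
      | none =>
        simp only [Finset.mem_sdiff, Finset.mem_univ, true_and, Finset.mem_image]
        constructor
        · intro _; exact hn
        · rintro - ⟨i, hi, hiv⟩; cases hiv
      | some j =>
        by_cases hjS : some j ∈ S <;>
          simp [hC, Finset.mem_sdiff, Finset.mem_image, Finset.mem_filter, hjS]
    have hdown := star_down w b B ν hν C
    rw [hSC] at hdown
    have hsub : S ⊆ Finset.univ := Finset.subset_univ S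
    have hsdiff : ∑ v ∈ Finset.univ \ S, p v + ∑ v ∈ S, p v = ∑ v, p v :=
      Finset.sum_sdiff hsub
    have hcompl : Finset.univ \ S = C.image some := by
      rw [← hSC, Finset.sdiff_sdiff_self_left, Finset.univ_inter]
    have hsum_img : ∑ v ∈ C.image some, p v = ∑ i ∈ C, p (some i) :=
      Finset.sum_image (fun i _ j _ h => Option.some_inj.mp h)
    have hps : ∑ i ∈ C, p (some i) ≤
        ∑ i ∈ C, (ν Finset.univ - ν (Finset.univ.erase (some i))) :=
      Finset.sum_le_sum fun i _ => hleaf i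
    have : ∑ v ∈ S, p v = ν Finset.univ - ∑ i ∈ C, p (some i) := by
      rw [← himp, ← hsdiff, hcompl, hsum_img]; ring
    rw [this]
    linarith
  · obtain ⟨x, -, -, h0, -, hval⟩ := (hν S).1
    have hx0 : ∀ i, x i = 0 := h0 hn
    have : ν S = 0 := by
      rw [hval]
      simp [hx0]
    rw [this]
    exact Finset.sum_nonneg fun v _ => hp v
end

section
/- In a star graph b-matching game, the characteristic function ν is submodular in the following sense: for any set S of agents and any two leaf vertices v, v' not in S, ν(S ∪ {v}) − ν(S) ≥ ν(S ∪ {v, v'}) − ν(S ∪ {v'}). -/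
/-- Split a target `m` below `∑ c` into pieces `δ i ≤ c i`. -/
lemma exists_delta {n : ℕ} (c : Fin n → ℕ) (m : ℕ) (hm : m ≤ ∑ i, c i) :
    ∃ δ : Fin n → ℕ, (∀ i, δ i ≤ c i) ∧ ∑ i, δ i = m := by
  induction m with
  | zero => exact ⟨0, fun i => Nat.zero_le _, by simp⟩
  | succ m ih =>
    obtain ⟨δ, hδ, hs⟩ := ih (Nat.le_of_succ_le hm)
    have hex : ∃ i, δ i < c i := by
      by_contra hc
      push_neg at hc
      have := Finset.sum_le_sum (fun i (_ : i ∈ Finset.univ) => hc i)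
      omega
    obtain ⟨i, hilt⟩ := hex
    refine ⟨fun k => δ k + if k = i then 1 else 0, fun k => ?_, ?_⟩
    · by_cases hk : k = i
      · subst hk; simpa using hilt
      · simp [hk]; exact hδ k
    · rw [Finset.sum_add_distrib, hs]
      simp

/-- In a star graph b-matching game the characteristic function is submodular:
for any coalition S and distinct leaves v, v' not in S,
ν(S ∪ {v}) − ν(S) ≥ ν(S ∪ {v, v'}) − ν(S ∪ {v'}). -/
theorem stmt2 {n : ℕ} (w : Fin n → ℝ) (hw : ∀ i, 0 ≤ w i)
    (b : Fin n → ℕ) (B : ℕ) (ν : Finset (Option (Fin n)) → ℝ)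
    (hν : ∀ S, IsGreatest (starNuSet w b B S) (ν S))
    (S : Finset (Option (Fin n))) (i j : Fin n) (hij : i ≠ j)
    (hi : some i ∉ S) (hj : some j ∉ S) :
    ν (insert (some i) (insert (some j) S)) - ν (insert (some j) S) ≤
      ν (insert (some i) S) - ν S := by
  obtain ⟨⟨x, hxb, hxS, hxnone, hxB, hxt⟩, hxub⟩ := hν (insert (some i) (insert (some j) S))
  obtain ⟨⟨y, hyb, hyS, hynone, hyB, hyt⟩, hyub⟩ := hν S
  have hyi : y i = 0 := hyS i hi
  have hyj : y j = 0 := hyS j hj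
  set c : Fin n → ℕ := fun k => min (y k) (b k - x k) with hc
  have hci : c i = 0 := by simp [hc, hyi]
  have hcj : c j = 0 := by simp [hc, hyj]
  have hcy : ∀ k, c k ≤ y k := fun k => min_le_left _ _
  -- key inequality : Y + x i + x j ≤ ∑ c + X
  have h1 : ∀ k, y k + (if k = i then x i else 0) + (if k = j then x j else 0) ≤ c k + x k := by
    intro k
    have hb := hxb k
    have hb' := hyb k
    by_cases hki : k = i
    · subst hki; simp [hci, hyi, hij]
    · by_cases hkj : k = j
      · subst hkj; simp [hcj, hyj, Ne.symm hij]
      · simp only [hki, hkj, if_neg, if_false, add_zero, hc]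
        omega
  have key : (∑ k, y k) + x i + x j ≤ (∑ k, c k) + ∑ k, x k := by
    have h2 := Finset.sum_le_sum (fun k (_ : k ∈ Finset.univ) => h1 k)
    simpa [Finset.sum_add_distrib, Finset.sum_ite_eq'] using h2
  have hm : (∑ k, y k) + x j - B ≤ ∑ k, c k := by omega
  obtain ⟨δ, hδc, hδm⟩ := exists_delta c ((∑ k, y k) + x j - B) hm
  have hδi : δ i = 0 := by have := hδc i; omega
  have hδj : δ j = 0 := by have := hδc j; omega
  have hδy : ∀ k, δ k ≤ y k := fun k => le_trans (hδc k) (hcy k)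
  have hδb : ∀ k, x k + δ k ≤ b k := by
    intro k
    have h3 := hδc k
    have h4 : c k ≤ b k - x k := min_le_right _ _
    have := hxb k
    omega
  set x' : Fin n → ℕ := fun k => (if k = j then 0 else x k) + δ k with hx'
  set y' : Fin n → ℕ := fun k => (if k = j then x j else 0) + (y k - δ k) with hy'
  -- sums of x', y'
  have hxsplit : (∑ k, (if k = j then (0:ℕ) else x k)) + x j = ∑ k, x k := by
    have hpt : ∀ k, x k = (if k = j then x j else 0) + (if k = j then 0 else x k) := by
      intro k; by_cases h : k = j
      · subst h; simp
      · simp [h]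
    conv_rhs => rw [Finset.sum_congr rfl (fun k _ => hpt k)]
    rw [Finset.sum_add_distrib]
    simp [Finset.sum_ite_eq']
    ring
  have hx'sum : ∑ k, x' k = (∑ k, (if k = j then (0:ℕ) else x k)) + ((∑ k, y k) + x j - B) := by
    rw [hx', Finset.sum_add_distrib, hδm]
  have hysub : (∑ k, (y k - δ k)) + ((∑ k, y k) + x j - B) = ∑ k, y k := by
    have hpt : ∀ k, (y k - δ k) + δ k = y k := fun k => Nat.sub_add_cancel (hδy k)
    have h5 : ∑ k, ((y k - δ k) + δ k) = ∑ k, y k := by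
      rw [Finset.sum_congr rfl (fun k _ => hpt k)]
    rw [Finset.sum_add_distrib, hδm] at h5
    exact h5
  have hy'sum : ∑ k, y' k = x j + (∑ k, (y k - δ k)) := by
    rw [hy', Finset.sum_add_distrib]
    simp [Finset.sum_ite_eq']
  -- membership for x'
  have hx'mem : (∑ k, (x' k : ℝ) * w k) ∈ starNuSet w b B (insert (some i) S) := by
    refine ⟨x', fun k => ?_, fun k hk => ?_, fun hnone k => ?_, ?_, rfl⟩
    · by_cases h : k = j
      · subst h; simp [hx', hδj]
      · simp only [hx', if_neg h]; exact hδb k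
    · have hk1 : k ≠ i := fun h => hk (by simp [h])
      have hk2 : some k ∉ S := fun h => hk (Finset.mem_insert_of_mem h)
      by_cases hkj : k = j
      · subst hkj; simp [hx', hδj]
      · have hx0 : x k = 0 := hxS k (by simp [hk1, hkj, hk2])
        have hy0 : y k = 0 := hyS k hk2
        have := hδy k
        simp only [hx', if_neg hkj]
        omega
    · have hn : none ∉ S := fun h => hnone (Finset.mem_insert_of_mem h)
      have hx0 := hxnone (by simp [hn])
      have hy0 := hynone hn
      have h6 := hδy k
      have h7 := hy0 k
      have h8 := hx0 k
      simp only [hx']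
      by_cases h : k = j <;> simp [h] <;> omega
    · rw [hx'sum]; omega
  -- membership for y'
  have hy'mem : (∑ k, (y' k : ℝ) * w k) ∈ starNuSet w b B (insert (some j) S) := by
    refine ⟨y', fun k => ?_, fun k hk => ?_, fun hnone k => ?_, ?_, rfl⟩
    · by_cases h : k = j
      · subst h
        have := hxb k
        simp [hy', hδj, hyj]
        omega
      · simp only [hy', if_neg h]
        have := hyb k
        have := hδy k
        omega
    · have hk1 : k ≠ j := fun h => hk (by simp [h])
      have hk2 : some k ∉ S := fun h => hk (Finset.mem_insert_of_mem h)
      have hy0 : y k = 0 := hyS k hk2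
      have := hδy k
      simp only [hy', if_neg hk1]
      omega
    · have hn : none ∉ S := fun h => hnone (Finset.mem_insert_of_mem h)
      have hx0 := hxnone (by simp [hn])
      have hy0 := hynone hn
      have h6 := hδy k
      have h7 := hy0 k
      have h8 := hx0 j
      simp only [hy']
      by_cases h : k = j <;> simp [h] <;> omega
    · rw [hy'sum]; omega
  -- the weights add up
  have hweight : ∑ k, (x' k : ℝ) * w k + ∑ k, (y' k : ℝ) * w k
      = ∑ k, (x k : ℝ) * w k + ∑ k, (y k : ℝ) * w k := by
    rw [← Finset.sum_add_distrib, ← Finset.sum_add_distrib]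
    refine Finset.sum_congr rfl (fun k _ => ?_)
    have hk : x' k + y' k = x k + y k := by
      by_cases h : k = j
      · subst h; simp [hx', hy', hδj, hyj]
      · simp only [hx', hy', if_neg h]
        have := hδy k
        omega
    have h2 : (x' k : ℝ) + (y' k : ℝ) = (x k : ℝ) + (y k : ℝ) := by
      exact_mod_cast congrArg (Nat.cast : ℕ → ℝ) hk
    rw [← add_mul, ← add_mul, h2]
  have hub1 : ∑ k, (x' k : ℝ) * w k ≤ ν (insert (some i) S) := (hν _).2 hx'mem
  have hub2 : ∑ k, (y' k : ℝ) * w k ≤ ν (insert (some j) S) := (hν _).2 hy'mem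
  linarith [hxt, hyt]
end

section
/- In a star graph b-matching game, the marginal utility of a leaf agent in a sub-game is at least its marginal utility in the full game: for any S ⊆ {u} ∪ V with u, v_i ∈ S, ν(S) − ν(S \ {v_i}) ≥ ν(G) − ν(G \ {v_i}). -/


private lemma exists_le_sum : ∀ (n : ℕ) (a : Fin n → ℕ) (d : ℕ), d ≤ ∑ j, a j →
    ∃ c : Fin n → ℕ, (∀ j, c j ≤ a j) ∧ ∑ j, c j = d := by
  intro n
  induction n with
  | zero =>
    intro a d hd
    simp only [Finset.univ_eq_empty, Finset.sum_empty, Nat.le_zero] at hd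
    exact ⟨0, fun j => j.elim0, by simp [hd]⟩
  | succ m ih =>
    intro a d hd
    rw [Fin.sum_univ_succ] at hd
    set c0 := min (a 0) d with hc0
    have h2 : d - c0 ≤ ∑ j : Fin m, a j.succ := by omega
    obtain ⟨c', hc', hsum'⟩ := ih (fun j => a j.succ) (d - c0) h2
    refine ⟨Fin.cons c0 c', ?_, ?_⟩
    · intro j
      refine Fin.cases ?_ ?_ j
      · simpa [hc0] using min_le_left _ _
      · intro k; simpa using hc' k
    · rw [Fin.sum_univ_succ]
      simp only [Fin.cons_zero, Fin.cons_succ]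
      rw [hsum']
      omega


/-- In a star graph b-matching game, the marginal utility of a leaf agent in
a sub-game is at least its marginal utility in the full game. -/
theorem stmt3 {n : ℕ} (w : Fin n → ℝ) (hw : ∀ i, 0 ≤ w i)
    (b : Fin n → ℕ) (B : ℕ) (ν : Finset (Option (Fin n)) → ℝ)
    (hν : ∀ S, IsGreatest (starNuSet w b B S) (ν S))
    (S : Finset (Option (Fin n))) (i : Fin n)
    (hu : none ∈ S) (hi : some i ∈ S) :
    ν Finset.univ - ν (Finset.univ.erase (some i)) ≤ ν S - ν (S.erase (some i)) := by
  obtain ⟨x, hxb, -, -, hxB, hxval⟩ := (hν Finset.univ).1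
  obtain ⟨z, hzb, hzS, -, hzB, hzval⟩ := (hν (S.erase (some i))).1
  have hzi : z i = 0 := hzS i (by simp)
  set a : Fin n → ℕ := fun j => if j = i then 0 else z j - x j with ha
  set E : Finset (Fin n) := Finset.univ.erase i with hE
  have hsplitx : ∑ j, x j = x i + ∑ j ∈ E, x j :=
    (Finset.add_sum_erase _ x (Finset.mem_univ i)).symm
  have hsplitz : ∑ j, z j = z i + ∑ j ∈ E, z j :=
    (Finset.add_sum_erase _ z (Finset.mem_univ i)).symm
  have hsplita : ∑ j, a j = a i + ∑ j ∈ E, a j :=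
    (Finset.add_sum_erase _ a (Finset.mem_univ i)).symm
  have hai : a i = 0 := by simp [ha]
  have hzE : ∀ j ∈ E, z j ≤ x j + a j := by
    intro j hj
    have hji : j ≠ i := (Finset.mem_erase.mp hj).1
    simp only [ha, if_neg hji]
    omega
  have hzle : ∑ j ∈ E, z j ≤ ∑ j ∈ E, (x j + a j) := Finset.sum_le_sum hzE
  rw [Finset.sum_add_distrib] at hzle
  set d : ℕ := (x i + ∑ j, z j) - B with hd
  have hdle : d ≤ ∑ j, a j := by omega
  obtain ⟨c, hca, hcsum⟩ := exists_le_sum n a d hdle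
  have hci : c i = 0 := Nat.le_zero.mp (hai ▸ hca i)
  have hcz : ∀ j, j ≠ i → c j ≤ z j - x j := by
    intro j hj; have := hca j; simpa [ha, if_neg hj] using this
  have hsplitc : ∑ j, c j = c i + ∑ j ∈ E, c j :=
    (Finset.add_sum_erase _ c (Finset.mem_univ i)).symm
  set x' : Fin n → ℕ := fun j => if j = i then 0 else x j + c j with hx'
  set z' : Fin n → ℕ := fun j => if j = i then x i else z j - c j with hz'
  -- sums of x' and z'
  have hsx' : ∑ j, x' j = ∑ j ∈ E, (x j + c j) := by
    rw [show ∑ j, x' j = x' i + ∑ j ∈ E, x' j from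
      (Finset.add_sum_erase _ x' (Finset.mem_univ i)).symm]
    simp only [hx', if_pos rfl, Nat.zero_add]
    exact Finset.sum_congr rfl fun j hj => by
      simp [if_neg (Finset.mem_erase.mp hj).1]
  have hsx'2 : ∑ j, x' j ≤ B := by
    rw [hsx', Finset.sum_add_distrib]
    omega
  have hsz'aux : ∑ j ∈ E, (z j - c j) = ∑ j ∈ E, z j - ∑ j ∈ E, c j :=
    Finset.sum_tsub_distrib E (fun j hj => by
      have h := hcz j (Finset.mem_erase.mp hj).1; omega)
  have hsz' : ∑ j, z' j ≤ B := by
    rw [show ∑ j, z' j = z' i + ∑ j ∈ E, z' j from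
      (Finset.add_sum_erase _ z' (Finset.mem_univ i)).symm]
    have : ∑ j ∈ E, z' j = ∑ j ∈ E, (z j - c j) :=
      Finset.sum_congr rfl fun j hj => by
        simp [hz', if_neg (Finset.mem_erase.mp hj).1]
    rw [this, hsz'aux]
    simp only [hz', if_pos rfl]
    have hcE : ∑ j ∈ E, c j ≤ ∑ j ∈ E, z j :=
      Finset.sum_le_sum fun j hj => by
        have h := hcz j (Finset.mem_erase.mp hj).1; omega
    omega
  -- feasibility memberships
  have hmem1 : (∑ j, (x' j : ℝ) * w j) ∈ starNuSet w b B (Finset.univ.erase (some i)) := by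
    refine ⟨x', ?_, ?_, ?_, hsx'2, rfl⟩
    · intro j
      by_cases hj : j = i
      · simp [hx', hj]
      · have h := hcz j hj
        have := hxb j; have := hzb j
        simp only [hx', if_neg hj]; omega
    · intro j hj
      have : j = i := by
        by_contra hne
        exact hj (Finset.mem_erase.mpr ⟨by simpa using hne, Finset.mem_univ _⟩)
      simp [hx', this]
    · intro hnone
      exact absurd (Finset.mem_erase.mpr ⟨by simp, Finset.mem_univ _⟩) hnone
  have hmem2 : (∑ j, (z' j : ℝ) * w j) ∈ starNuSet w b B S := by
    refine ⟨z', ?_, ?_, ?_, hsz', rfl⟩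
    · intro j
      by_cases hj : j = i
      · subst hj; simp only [hz', if_pos rfl]; exact le_trans (by omega) (hxb j) |>.trans (le_refl _) |>.trans (le_refl _)
      · have := hzb j; simp only [hz', if_neg hj]; omega
    · intro j hj
      have hji : j ≠ i := by rintro rfl; exact hj hi
      have hzj : z j = 0 := hzS j (fun hmem => hj (Finset.mem_of_mem_erase hmem))
      simp only [hz', if_neg hji]; omega
    · intro hnone; exact absurd hu hnone
  have h1 : (∑ j, (x' j : ℝ) * w j) ≤ ν (Finset.univ.erase (some i)) :=
    (hν _).2 hmem1
  have h2 : (∑ j, (z' j : ℝ) * w j) ≤ ν S := (hν S).2 hmem2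
  -- value conservation
  have hval : (∑ j, (x' j : ℝ) * w j) + (∑ j, (z' j : ℝ) * w j)
      = (∑ j, (x j : ℝ) * w j) + (∑ j, (z j : ℝ) * w j) := by
    rw [← Finset.sum_add_distrib, ← Finset.sum_add_distrib]
    refine Finset.sum_congr rfl fun j _ => ?_
    by_cases hj : j = i
    · subst hj
      simp only [hx', hz', if_pos rfl, hzi]
      push_cast
      ring
    · have h := hcz j hj
      have hczj : c j ≤ z j := by omega
      simp only [hx', hz', if_neg hj]
      rw [Nat.cast_sub hczj]
      push_cast
      ring
  linarith [hxval ▸ le_refl (ν Finset.univ), hzval ▸ le_refl (ν (S.erase (some i)))]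
end

section
/- In the knapsack-reduction star instance, if S is a coalition containing leaf v_i where v_i is not fully matched in some maximum weight b-matching of S, then ν(S) − p(S) < ν(S \ {v_i}) − p(S \ {v_i}). -/
/-- Achievable b-matching weights for a coalition `S` in the knapsack-reduction star
instance: center `u = none` has capacity `C`; leaf `v_i = some i` has capacity `c i`
and edge weight `a i + 1`. -/
def knapNuSet {n : ℕ} (a c : Fin n → ℕ) (C : ℕ)
    (S : Finset (Option (Fin n))) : Set ℝ :=
  {t | ∃ x : Fin n → ℕ, (∀ i, x i ≤ c i) ∧ (∀ i, some i ∉ S → x i = 0) ∧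
    (none ∉ S → ∀ i, x i = 0) ∧ (∑ i, x i) ≤ C ∧
    t = ∑ i, (x i : ℝ) * ((a i : ℝ) + 1)}

/-- Total profit of a coalition `S`: the center gets `A`, leaf `v_i` gets
`c i * (a i + 1) − a i`. -/
def knapProfit {n : ℕ} (a c : Fin n → ℕ) (A : ℕ)
    (S : Finset (Option (Fin n))) : ℝ :=
  ∑ v ∈ S, Option.elim v (A : ℝ) (fun i => (c i : ℝ) * ((a i : ℝ) + 1) - (a i : ℝ))

/-- In the knapsack-reduction star instance, if a coalition S contains a leaf
v_i that is not fully matched in some maximum weight b-matching of S, then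
ν(S) − p(S) < ν(S \ {v_i}) − p(S \ {v_i}). -/
theorem stmt5 {n : ℕ} (a c : Fin n → ℕ) (C A : ℕ)
    (ν : Finset (Option (Fin n)) → ℝ)
    (hν : ∀ S, IsGreatest (knapNuSet a c C S) (ν S))
    (S : Finset (Option (Fin n))) (i : Fin n) (hi : some i ∈ S)
    (hx : ∃ x : Fin n → ℕ, (∀ j, x j ≤ c j) ∧ (∀ j, some j ∉ S → x j = 0) ∧
      (none ∉ S → ∀ j, x j = 0) ∧ (∑ j, x j) ≤ C ∧
      (∑ j, (x j : ℝ) * ((a j : ℝ) + 1)) = ν S ∧ x i < c i) :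
    ν S - knapProfit a c A S <
      ν (S.erase (some i)) - knapProfit a c A (S.erase (some i)) := by
  obtain ⟨x, hxc, hxS, hxn, hxC, hxν, hxi⟩ := hx
  set S' := S.erase (some i) with hS'
  -- modified vector
  set x' : Fin n → ℕ := fun j => if j = i then 0 else x j with hx'
  have hmem : (∑ j, (x' j : ℝ) * ((a j : ℝ) + 1)) ∈ knapNuSet a c C S' := by
    refine ⟨x', ?_, ?_, ?_, ?_, rfl⟩
    · intro j; by_cases h : j = i <;> simp [hx', h, hxc j]
    · intro j hj
      by_cases h : j = i
      · simp [hx', h]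
      · simp only [hx', if_neg h]
        exact hxS j (fun hms => hj (Finset.mem_erase.2 ⟨by simpa using h, hms⟩))
    · intro hn j
      have hn' : none ∉ S := fun h => hn (Finset.mem_erase.2 ⟨by simp, h⟩)
      by_cases h : j = i <;> simp [hx', h, hxn hn' j]
    · calc ∑ j, x' j ≤ ∑ j, x j := Finset.sum_le_sum (fun j _ => by
            by_cases h : j = i <;> simp [hx', h])
        _ ≤ C := hxC
  have hle : (∑ j, (x' j : ℝ) * ((a j : ℝ) + 1)) ≤ ν S' := (hν S').2 hmem
  have hsum : (∑ j, (x' j : ℝ) * ((a j : ℝ) + 1))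
      = (∑ j, (x j : ℝ) * ((a j : ℝ) + 1)) - (x i : ℝ) * ((a i : ℝ) + 1) := by
    rw [eq_sub_iff_add_eq, ← Finset.sum_erase_add _ _ (Finset.mem_univ i),
        ← Finset.sum_erase_add Finset.univ (fun j => (x j : ℝ) * ((a j : ℝ) + 1))
          (Finset.mem_univ i)]
    simp only [hx', if_pos rfl]
    rw [Finset.sum_congr rfl (fun j hj => by
      rw [if_neg (Finset.ne_of_mem_erase hj)])]
    push_cast; ring
  have hprof : knapProfit a c A S = knapProfit a c A S'
      + ((c i : ℝ) * ((a i : ℝ) + 1) - (a i : ℝ)) := by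
    unfold knapProfit
    rw [← Finset.sum_erase_add S _ hi]
    rfl
  have hgap : (x i : ℝ) * ((a i : ℝ) + 1) < (c i : ℝ) * ((a i : ℝ) + 1) - (a i : ℝ) := by
    have h1 : (x i : ℝ) + 1 ≤ (c i : ℝ) := by exact_mod_cast hxi
    nlinarith [Nat.cast_nonneg (α := ℝ) (a i)]
  have : ν S - (x i : ℝ) * ((a i : ℝ) + 1) ≤ ν S' := by
    rw [← hxν, ← hsum]; exact hle
  rw [hprof]; linarith
end

section
/- In the knapsack-reduction star instance, if S is a coalition containing the center u in which every leaf of S is fully matched in a maximum weight b-matching, then ν(S) − p(S) = Σ_{v_i ∈ S} a_i − A. -/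
/-- In the knapsack-reduction star instance, if S contains the center and in
some maximum weight b-matching of S every leaf of S is fully matched, then
ν(S) − p(S) = Σ_{v_i ∈ S} a_i − A. -/
theorem stmt6 {n : ℕ} (a c : Fin n → ℕ) (C A : ℕ)
    (ν : Finset (Option (Fin n)) → ℝ)
    (hν : ∀ S, IsGreatest (knapNuSet a c C S) (ν S))
    (S : Finset (Option (Fin n))) (hu : none ∈ S)
    (hx : ∃ x : Fin n → ℕ, (∀ j, x j ≤ c j) ∧ (∀ j, some j ∉ S → x j = 0) ∧
      (none ∉ S → ∀ j, x j = 0) ∧ (∑ j, x j) ≤ C ∧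
      (∑ j, (x j : ℝ) * ((a j : ℝ) + 1)) = ν S ∧ (∀ j, some j ∈ S → x j = c j)) :
    ν S - knapProfit a c A S =
      (∑ j ∈ Finset.univ.filter (fun j => some j ∈ S), (a j : ℝ)) - (A : ℝ) := by
  obtain ⟨x, hle, h0, -, -, hval, hfull⟩ := hx
  have hν' : ν S = ∑ j ∈ Finset.univ.filter (fun j => some j ∈ S),
      (c j : ℝ) * ((a j : ℝ) + 1) := by
    rw [← hval, ← Finset.sum_filter_add_sum_filter_not Finset.univ (fun j => some j ∈ S)]
    have h1 : ∑ j ∈ Finset.univ.filter (fun j => ¬ some j ∈ S),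
        (x j : ℝ) * ((a j : ℝ) + 1) = 0 := by
      apply Finset.sum_eq_zero
      intro j hj
      simp only [Finset.mem_filter] at hj
      rw [h0 j hj.2]; simp
    rw [h1, add_zero]
    apply Finset.sum_congr rfl
    intro j hj
    simp only [Finset.mem_filter] at hj
    rw [hfull j hj.2]
  have hP : knapProfit a c A S = (A : ℝ) +
      ∑ j ∈ Finset.univ.filter (fun j => some j ∈ S),
        ((c j : ℝ) * ((a j : ℝ) + 1) - (a j : ℝ)) := by
    unfold knapProfit
    rw [← Finset.add_sum_erase _ _ hu]
    congr 1
    have hset : S.erase none =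
        (Finset.univ.filter (fun j => some j ∈ S)).image some := by
      ext v
      simp only [Finset.mem_image, Finset.mem_filter, Finset.mem_univ, true_and,
        Finset.mem_erase]
      constructor
      · rintro ⟨hne, hv⟩
        obtain ⟨j, rfl⟩ := Option.ne_none_iff_exists'.mp hne
        exact ⟨j, hv, rfl⟩
      · rintro ⟨j, hj, rfl⟩
        exact ⟨Option.some_ne_none j, hj⟩
    rw [hset, Finset.sum_image (by intro p _ q _ h; exact Option.some_injective _ h)]
    rfl
  rw [hν', hP, Finset.sum_sub_distrib]
  ring
end

section
/- In the augmented graph G of the co-NP-hardness construction, no maximum weight b-matching uses any center-leaf edge (u, v_i), and consequently ν(G) = b_x·w_x + b_y·w_y. -/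
/-- In the augmented graph G of the co-NP-hardness construction (star with
center u, leaves v_i, plus vertex x joined to all leaves by edges of weight w_x and
vertex y joined to u by an edge of weight w_y), no maximum weight b-matching uses any
center-leaf edge (u, v_i), and consequently ν(G) = b_x·w_x + b_y·w_y.
A matching is given by multiplicities `xu i` on edges (u,v_i), `xx i` on edges (x,v_i)
and `my` on the edge (u,y). -/
theorem stmt9 {n : ℕ} (w : Fin n → ℝ) (hw : ∀ i, 0 ≤ w i)
    (b : Fin n → ℕ) (bu : ℕ) (pu : ℝ) (pl : Fin n → ℝ)
    (hpu : 0 ≤ pu) (hpl : ∀ i, 0 ≤ pl i)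
    (wx wy : ℝ) (bx bY : ℕ)
    (hwx : wx = (∑ i, pl i) + 1) (hwy : wy = pu + 1)
    (hbx : bx = ∑ i, b i) (hbY : bY = bu)
    (hwlt : ∀ i, w i < wx + wy)
    (ν : ℝ)
    (hν : IsGreatest {t | ∃ (xu xx : Fin n → ℕ) (my : ℕ),
        (∀ i, xu i + xx i ≤ b i) ∧ (∑ i, xu i) + my ≤ bu ∧
        (∑ i, xx i) ≤ bx ∧ my ≤ bY ∧
        t = ∑ i, (xu i : ℝ) * w i + ∑ i, (xx i : ℝ) * wx + (my : ℝ) * wy} ν) :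
    (∀ (xu xx : Fin n → ℕ) (my : ℕ),
        (∀ i, xu i + xx i ≤ b i) → (∑ i, xu i) + my ≤ bu →
        (∑ i, xx i) ≤ bx → my ≤ bY →
        (∑ i, (xu i : ℝ) * w i + ∑ i, (xx i : ℝ) * wx + (my : ℝ) * wy) = ν →
        ∀ i, xu i = 0) ∧
    ν = (bx : ℝ) * wx + (bY : ℝ) * wy := by
  have hwx0 : (0:ℝ) ≤ wx := by
    have := Finset.sum_nonneg (fun i (_ : i ∈ Finset.univ) => hpl i)
    rw [hwx]; linarith
  have hwy0 : (0:ℝ) ≤ wy := by rw [hwy]; linarith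
  set B : ℝ := (bx : ℝ) * wx + (bY : ℝ) * wy with hB
  -- key bound
  have key : ∀ (xu xx : Fin n → ℕ) (my : ℕ),
      (∀ i, xu i + xx i ≤ b i) → (∑ i, xu i) + my ≤ bu →
      (∑ i, xx i) ≤ bx → my ≤ bY →
      (∑ i, (xu i : ℝ) * w i + ∑ i, (xx i : ℝ) * wx + (my : ℝ) * wy)
        + ∑ i, (xu i : ℝ) * (wx + wy - w i) ≤ B := by
    intro xu xx my h1 h2 h3 h4
    have hA : (∑ i, (xu i : ℝ)) + (∑ i, (xx i : ℝ)) ≤ (bx : ℝ) := by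
      have h : (∑ i, (xu i + xx i)) ≤ bx := by
        rw [hbx]; exact Finset.sum_le_sum fun i _ => h1 i
      have h' := (Nat.cast_le (α := ℝ)).2 h
      push_cast at h'
      rw [Finset.sum_add_distrib] at h'
      exact h'
    have hM : (∑ i, (xu i : ℝ)) + (my : ℝ) ≤ (bY : ℝ) := by
      have h : (∑ i, xu i) + my ≤ bY := by rw [hbY]; exact h2
      have h' := (Nat.cast_le (α := ℝ)).2 h
      push_cast at h'
      exact h'
    have ea : ∑ i, (xu i : ℝ) * w i + ∑ i, (xu i : ℝ) * (wx + wy - w i)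
        = (∑ i, (xu i : ℝ)) * (wx + wy) := by
      rw [← Finset.sum_add_distrib, Finset.sum_mul]
      exact Finset.sum_congr rfl fun i _ => by ring
    have eb : ∑ i, (xx i : ℝ) * wx = (∑ i, (xx i : ℝ)) * wx :=
      (Finset.sum_mul ..).symm
    have b1 : ((∑ i, (xu i : ℝ)) + (∑ i, (xx i : ℝ))) * wx ≤ (bx : ℝ) * wx :=
      mul_le_mul_of_nonneg_right hA hwx0
    have b2 : ((∑ i, (xu i : ℝ)) + (my : ℝ)) * wy ≤ (bY : ℝ) * wy :=
      mul_le_mul_of_nonneg_right hM hwy0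
    nlinarith [ea, eb, b1, b2]
  -- B is achievable
  have hmem : B ∈ {t | ∃ (xu xx : Fin n → ℕ) (my : ℕ),
        (∀ i, xu i + xx i ≤ b i) ∧ (∑ i, xu i) + my ≤ bu ∧
        (∑ i, xx i) ≤ bx ∧ my ≤ bY ∧
        t = ∑ i, (xu i : ℝ) * w i + ∑ i, (xx i : ℝ) * wx + (my : ℝ) * wy} := by
    refine ⟨fun _ => 0, b, bu, fun i => by simp, by simp, le_of_eq hbx.symm,
      le_of_eq hbY.symm, ?_⟩
    rw [hB, hbx, hbY]
    push_cast
    rw [Finset.sum_mul]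
    simp
  have hle : ν ≤ B := by
    obtain ⟨xu, xx, my, c1, c2, c3, c4, ht⟩ := hν.1
    have hk := key xu xx my c1 c2 c3 c4
    have hnn : 0 ≤ ∑ i, (xu i : ℝ) * (wx + wy - w i) :=
      Finset.sum_nonneg fun i _ =>
        mul_nonneg (Nat.cast_nonneg _) (by linarith [hwlt i])
    linarith [hk, ht]
  have hνeq : ν = B := le_antisymm hle (hν.2 hmem)
  refine ⟨?_, hνeq⟩
  intro xu xx my c1 c2 c3 c4 heq i
  have hk := key xu xx my c1 c2 c3 c4
  rw [heq, hνeq] at hk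
  have hsle : ∑ j, (xu j : ℝ) * (wx + wy - w j) ≤ 0 := by linarith
  have hnn : ∀ j ∈ Finset.univ, 0 ≤ (xu j : ℝ) * (wx + wy - w j) :=
    fun j _ => mul_nonneg (Nat.cast_nonneg _) (by linarith [hwlt j])
  have hzero : ∑ j, (xu j : ℝ) * (wx + wy - w j) = 0 :=
    le_antisymm hsle (Finset.sum_nonneg hnn)
  have := (Finset.sum_eq_zero_iff_of_nonneg hnn).1 hzero i (Finset.mem_univ i)
  have hpos : 0 < wx + wy - w i := by linarith [hwlt i]
  have : (xu i : ℝ) = 0 := by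
    rcases mul_eq_zero.1 this with h | h
    · exact h
    · linarith
  exact_mod_cast this
end

section
/- In the augmented graph of the co-NP-hardness construction, the coalition S = {x, v_1, ..., v_n} satisfies p(S) = ν(S), i.e., it is not unstable. -/
/-- In the augmented graph of the co-NP-hardness construction, the coalition
S = {x, v_1, ..., v_n} is not unstable: p(S) = ν(S), where ν(S) is the maximum weight
b-matching value on S (x joined to each leaf v_i by an edge of weight w_x, leaf
capacities b i, and x's capacity b_x = Σ b i). -/
theorem stmt11 {n : ℕ} (pl : Fin n → ℝ) (hpl : ∀ i, 0 ≤ pl i)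
    (b : Fin n → ℕ) (wx px : ℝ) (bx : ℕ)
    (hwx : wx = (∑ i, pl i) + 1) (hbx : bx = ∑ i, b i)
    (hpx : px = ((bx : ℝ) - 1) * wx + 1)
    (ν : ℝ)
    (hν : IsGreatest {t | ∃ x : Fin n → ℕ, (∀ i, x i ≤ b i) ∧ (∑ i, x i) ≤ bx ∧
      t = ∑ i, (x i : ℝ) * wx} ν) :
    px + ∑ i, pl i = ν := by
  have hwx0 : 0 ≤ wx := by
    rw [hwx]
    have : 0 ≤ ∑ i, pl i := Finset.sum_nonneg fun i _ => hpl i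
    linarith
  have hmem : ((bx : ℝ) * wx) ∈ {t | ∃ x : Fin n → ℕ, (∀ i, x i ≤ b i) ∧ (∑ i, x i) ≤ bx ∧
      t = ∑ i, (x i : ℝ) * wx} := by
    refine ⟨b, fun i => le_refl _, le_of_eq hbx.symm, ?_⟩
    rw [← Finset.sum_mul, hbx]
    push_cast
    ring
  have h1 : (bx : ℝ) * wx ≤ ν := hν.2 hmem
  have h2 : ν ≤ (bx : ℝ) * wx := by
    obtain ⟨x, hx, hsum, ht⟩ := hν.1
    rw [ht, ← Finset.sum_mul]
    have : ((∑ i, x i : ℕ) : ℝ) ≤ (bx : ℝ) := by exact_mod_cast hsum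
    push_cast at this ⊢
    exact mul_le_mul_of_nonneg_right this hwx0
  have : ν = (bx : ℝ) * wx := le_antisymm h2 h1
  rw [this, hpx, hwx]
  ring
end

section
/- In the duplication construction for the fairness hardness result, every maximum weight b-matching of G' uses each partner edge (v, v') exactly once, and ν(G') = ν(G) + Σ_{v} (2p* − p_v). -/
lemma sum_wupd {α : Type} [Fintype α] [DecidableEq α] (f : α → ℕ) (c : α → ℝ) (a : α) (n : ℕ) :
    ∑ i, ((if i = a then n else f i : ℕ) : ℝ) * c i
      = (∑ i, (f i : ℝ) * c i) + ((n : ℝ) - (f a : ℝ)) * c a := by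
  classical
  rw [Finset.sum_eq_sum_sdiff_singleton_add (Finset.mem_univ a),
      Finset.sum_eq_sum_sdiff_singleton_add (Finset.mem_univ a) (fun i => (f i : ℝ) * c i)]
  have h : ∑ i ∈ Finset.univ \ {a}, ((if i = a then n else f i : ℕ) : ℝ) * c i
      = ∑ i ∈ Finset.univ \ {a}, (f i : ℝ) * c i := by
    apply Finset.sum_congr rfl
    intro i hi
    simp only [Finset.mem_sdiff, Finset.mem_singleton] at hi
    simp [hi.2]
  rw [h]
  simp
  ring

lemma sum_upd_nat {α : Type} [Fintype α] [DecidableEq α] (f : α → ℕ) (a : α) (h : f a ≠ 0) :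
    ∑ i, (if i = a then f a - 1 else f i) + 1 = ∑ i, f i := by
  classical
  rw [Finset.sum_eq_sum_sdiff_singleton_add (Finset.mem_univ a),
      Finset.sum_eq_sum_sdiff_singleton_add (Finset.mem_univ a) f]
  have heq : ∑ i ∈ Finset.univ \ {a}, (if i = a then f a - 1 else f i)
      = ∑ i ∈ Finset.univ \ {a}, f i := by
    apply Finset.sum_congr rfl
    intro i hi
    simp only [Finset.mem_sdiff, Finset.mem_singleton] at hi
    simp [hi.2]
  rw [heq]
  simp
  omega



/-- Achievable b-matching weights in a bipartite graph with sides `U`, `V`, edge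
weights `w`, vertex capacities `b`, restricted to coalitions `S ⊆ U ⊕ V`. -/
def bipNuSet {U V : Type} [Fintype U] [Fintype V]
    (w : U × V → ℝ) (b : U ⊕ V → ℕ) (S : Finset (U ⊕ V)) : Set ℝ :=
  {t | ∃ x : U × V → ℕ,
    (∀ u v, x (u, v) ≠ 0 → Sum.inl u ∈ S ∧ Sum.inr v ∈ S) ∧
    (∀ u : U, (∑ v, x (u, v)) ≤ b (Sum.inl u)) ∧
    (∀ v : V, (∑ u, x (u, v)) ≤ b (Sum.inr v)) ∧
    t = ∑ e, (x e : ℝ) * w e}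

/-- Achievable b-matching weights in the duplication construction `G'`: every vertex `v`
of `G` (capacity raised by 1) gets a partner `v'` of capacity 1 joined to `v` by an edge
of weight `2p* − p v`. Agents of `G'` are `(U ⊕ V) ⊕ (U ⊕ V)`, with `Sum.inl` the
original vertices and `Sum.inr` the partner vertices; `x` gives the multiplicities of the
original edges and `y v` the multiplicity of the partner edge at `v`. -/
def dupNuSet {U V : Type} [Fintype U] [Fintype V]
    (w : U × V → ℝ) (b : U ⊕ V → ℕ) (p : U ⊕ V → ℝ) (pstar : ℝ)
    (S : Finset ((U ⊕ V) ⊕ (U ⊕ V))) : Set ℝ :=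
  {t | ∃ (x : U × V → ℕ) (y : U ⊕ V → ℕ),
    (∀ u v, x (u, v) ≠ 0 → Sum.inl (Sum.inl u) ∈ S ∧ Sum.inl (Sum.inr v) ∈ S) ∧
    (∀ v, y v ≠ 0 → Sum.inl v ∈ S ∧ Sum.inr v ∈ S) ∧
    (∀ v, y v ≤ 1) ∧
    (∀ u : U, (∑ v, x (u, v)) + y (Sum.inl u) ≤ b (Sum.inl u) + 1) ∧
    (∀ v : V, (∑ u, x (u, v)) + y (Sum.inr v) ≤ b (Sum.inr v) + 1) ∧
    t = (∑ e, (x e : ℝ) * w e) + ∑ v, (y v : ℝ) * (2 * pstar - p v)}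

/-- In the duplication construction, every maximum weight b-matching of G'
uses each partner edge (v, v') exactly once, and ν(G') = ν(G) + Σ_v (2p* − p_v). -/
theorem stmt12 {U V : Type} [Fintype U] [Fintype V] [Nonempty U] [Nonempty V]
    (w : U × V → ℝ) (hw : ∀ e, 0 ≤ w e)
    (b : U ⊕ V → ℕ) (p : U ⊕ V → ℝ) (hp : ∀ v, 0 ≤ p v)
    (pstar : ℝ) (hpstar : pstar = 1 + max (⨆ v, p v) (⨆ e, w e))
    (ν ν' : ℝ)
    (hν : IsGreatest (bipNuSet w b Finset.univ) ν)
    (hν' : IsGreatest (dupNuSet w b p pstar Finset.univ) ν') :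
    (∀ (x : U × V → ℕ) (y : U ⊕ V → ℕ),
      (∀ v, y v ≤ 1) →
      (∀ u : U, (∑ v, x (u, v)) + y (Sum.inl u) ≤ b (Sum.inl u) + 1) →
      (∀ v : V, (∑ u, x (u, v)) + y (Sum.inr v) ≤ b (Sum.inr v) + 1) →
      ((∑ e, (x e : ℝ) * w e) + ∑ v, (y v : ℝ) * (2 * pstar - p v)) = ν' →
      ∀ v, y v = 1) ∧
    ν' = ν + ∑ v, (2 * pstar - p v) := by
  classical
  have hbddp : ∀ v, p v ≤ pstar - 1 := by
    intro v
    have h1 : p v ≤ ⨆ v, p v := le_ciSup (Set.Finite.bddAbove (Set.finite_range p)) v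
    have h2 := le_max_left (⨆ v, p v) (⨆ e, w e)
    rw [hpstar]; linarith
  have hbddw : ∀ e, w e ≤ pstar - 1 := by
    intro e
    have h1 : w e ≤ ⨆ e, w e := le_ciSup (Set.Finite.bddAbove (Set.finite_range w)) e
    have h2 := le_max_right (⨆ v, p v) (⨆ e, w e)
    rw [hpstar]; linarith
  have hps1 : (1 : ℝ) ≤ pstar := by
    obtain ⟨e₀⟩ := (inferInstance : Nonempty (U × V))
    have h1 : w e₀ ≤ ⨆ e, w e := le_ciSup (Set.Finite.bddAbove (Set.finite_range w)) e₀
    have h2 := le_max_right (⨆ v, p v) (⨆ e, w e)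
    have h3 := hw e₀
    rw [hpstar]; linarith
  have part1 : ∀ (x : U × V → ℕ) (y : U ⊕ V → ℕ),
      (∀ v, y v ≤ 1) →
      (∀ u : U, (∑ v, x (u, v)) + y (Sum.inl u) ≤ b (Sum.inl u) + 1) →
      (∀ v : V, (∑ u, x (u, v)) + y (Sum.inr v) ≤ b (Sum.inr v) + 1) →
      ((∑ e, (x e : ℝ) * w e) + ∑ v, (y v : ℝ) * (2 * pstar - p v)) = ν' →
      ∀ v, y v = 1 := by
    intro x y hy1 hbu hbv hval v₀
    by_contra hne
    have hy0 : y v₀ = 0 := by have := hy1 v₀; omega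
    cases v₀ with
    | inl u₀ =>
      have hrow : ∑ v, x (u₀, v) ≤ b (Sum.inl u₀) + 1 := by
        have := hbu u₀; omega
      by_cases hle : ∑ v, x (u₀, v) ≤ b (Sum.inl u₀)
      · -- just add the partner edge at u₀
        have hmem : (ν' + (2 * pstar - p (Sum.inl u₀))) ∈ dupNuSet w b p pstar Finset.univ := by
          refine ⟨x, fun v => if v = Sum.inl u₀ then 1 else y v, ?_, ?_, ?_, ?_, ?_, ?_⟩
          · intro u v _; exact ⟨Finset.mem_univ _, Finset.mem_univ _⟩
          · intro v _; exact ⟨Finset.mem_univ _, Finset.mem_univ _⟩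
          · intro v; by_cases h : v = Sum.inl u₀ <;> simp [h, hy1 v]
          · intro u
            by_cases h : u = u₀
            · subst h; beta_reduce; rw [if_pos rfl]; omega
            · have h2 : (Sum.inl u : U ⊕ V) ≠ Sum.inl u₀ := by simp [h]
              simp only [if_neg h2]; exact hbu u
          · intro v
            have h2 : (Sum.inr v : U ⊕ V) ≠ Sum.inl u₀ := by simp
            simp only [if_neg h2]; exact hbv v
          · have hvy := sum_wupd y (fun v => 2 * pstar - p v) (Sum.inl u₀) 1
            simp only [hy0, Nat.cast_zero, Nat.cast_one] at hvy
            simp only []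
            rw [hvy]
            linarith [hval]
        have hle2 := hν'.2 hmem
        have := hbddp (Sum.inl u₀)
        linarith
      · -- remove one edge at u₀ and add the partner edge
        have hsum : ∑ v, x (u₀, v) = b (Sum.inl u₀) + 1 := by omega
        have hxne : ∃ v₁, x (u₀, v₁) ≠ 0 := by
          by_contra hall
          push_neg at hall
          have : ∑ v, x (u₀, v) = 0 := Finset.sum_eq_zero (fun v _ => hall v)
          omega
        obtain ⟨v₁, hv₁⟩ := hxne
        have hrowEq : ∑ v, (if v = v₁ then x (u₀, v₁) - 1 else x (u₀, v)) + 1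
            = ∑ v, x (u₀, v) := by
          have := sum_upd_nat (fun v => x (u₀, v)) v₁ hv₁
          simpa using this
        have hmem : (ν' + (2 * pstar - p (Sum.inl u₀)) - w (u₀, v₁))
            ∈ dupNuSet w b p pstar Finset.univ := by
          refine ⟨fun e => if e = (u₀, v₁) then x (u₀, v₁) - 1 else x e,
            fun v => if v = Sum.inl u₀ then 1 else y v, ?_, ?_, ?_, ?_, ?_, ?_⟩
          · intro u v _; exact ⟨Finset.mem_univ _, Finset.mem_univ _⟩
          · intro v _; exact ⟨Finset.mem_univ _, Finset.mem_univ _⟩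
          · intro v; by_cases h : v = Sum.inl u₀ <;> simp [h, hy1 v]
          · intro u
            by_cases h : u = u₀
            · subst h
              beta_reduce; rw [if_pos rfl]
              have heq : ∀ v, (if ((u, v) : U × V) = (u, v₁) then x (u, v₁) - 1 else x (u, v))
                  = (if v = v₁ then x (u, v₁) - 1 else x (u, v)) := by
                intro v; simp [Prod.ext_iff]
              rw [Finset.sum_congr rfl (fun v _ => heq v)]
              omega
            · have h2 : (Sum.inl u : U ⊕ V) ≠ Sum.inl u₀ := by simp [h]
              simp only [if_neg h2]
              have heq : ∀ v, (if ((u, v) : U × V) = (u₀, v₁) then x (u₀, v₁) - 1 else x (u, v))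
                  = x (u, v) := by
                intro v; simp [Prod.ext_iff, h]
              rw [Finset.sum_congr rfl (fun v _ => heq v)]
              exact hbu u
          · intro v
            have h2 : (Sum.inr v : U ⊕ V) ≠ Sum.inl u₀ := by simp
            simp only [if_neg h2]
            have hle3 : ∑ u, (if ((u, v) : U × V) = (u₀, v₁) then x (u₀, v₁) - 1 else x (u, v))
                ≤ ∑ u, x (u, v) := by
              apply Finset.sum_le_sum
              intro u _
              by_cases h : ((u, v) : U × V) = (u₀, v₁)
              · rw [if_pos h]; rw [show x (u, v) = x (u₀, v₁) by rw [h]]; omega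
              · rw [if_neg h]
            have := hbv v
            omega
          · have hvx := sum_wupd x w (u₀, v₁) (x (u₀, v₁) - 1)
            have hcast : ((x (u₀, v₁) - 1 : ℕ) : ℝ) = (x (u₀, v₁) : ℝ) - 1 := by
              have h1 : 1 ≤ x (u₀, v₁) := Nat.one_le_iff_ne_zero.mpr hv₁
              push_cast [Nat.cast_sub h1]
              ring
            rw [hcast] at hvx
            have hvy := sum_wupd y (fun v => 2 * pstar - p v) (Sum.inl u₀) 1
            simp only [hy0, Nat.cast_zero, Nat.cast_one] at hvy
            simp only []
            rw [hvx, hvy]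
            linarith [hval]
        have hle2 := hν'.2 hmem
        have h3 := hbddp (Sum.inl u₀)
        have h4 := hbddw (u₀, v₁)
        linarith
    | inr w₀ =>
      have hrow : ∑ u, x (u, w₀) ≤ b (Sum.inr w₀) + 1 := by
        have := hbv w₀; omega
      by_cases hle : ∑ u, x (u, w₀) ≤ b (Sum.inr w₀)
      · have hmem : (ν' + (2 * pstar - p (Sum.inr w₀))) ∈ dupNuSet w b p pstar Finset.univ := by
          refine ⟨x, fun v => if v = Sum.inr w₀ then 1 else y v, ?_, ?_, ?_, ?_, ?_, ?_⟩
          · intro u v _; exact ⟨Finset.mem_univ _, Finset.mem_univ _⟩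
          · intro v _; exact ⟨Finset.mem_univ _, Finset.mem_univ _⟩
          · intro v; by_cases h : v = Sum.inr w₀ <;> simp [h, hy1 v]
          · intro u
            have h2 : (Sum.inl u : U ⊕ V) ≠ Sum.inr w₀ := by simp
            simp only [if_neg h2]; exact hbu u
          · intro v
            by_cases h : v = w₀
            · subst h; beta_reduce; rw [if_pos rfl]; omega
            · have h2 : (Sum.inr v : U ⊕ V) ≠ Sum.inr w₀ := by simp [h]
              simp only [if_neg h2]; exact hbv v
          · have hvy := sum_wupd y (fun v => 2 * pstar - p v) (Sum.inr w₀) 1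
            simp only [hy0, Nat.cast_zero, Nat.cast_one] at hvy
            simp only []
            rw [hvy]
            linarith [hval]
        have hle2 := hν'.2 hmem
        have := hbddp (Sum.inr w₀)
        linarith
      · have hsum : ∑ u, x (u, w₀) = b (Sum.inr w₀) + 1 := by omega
        have hxne : ∃ u₁, x (u₁, w₀) ≠ 0 := by
          by_contra hall
          push_neg at hall
          have : ∑ u, x (u, w₀) = 0 := Finset.sum_eq_zero (fun u _ => hall u)
          omega
        obtain ⟨u₁, hu₁⟩ := hxne
        have hrowEq : ∑ u, (if u = u₁ then x (u₁, w₀) - 1 else x (u, w₀)) + 1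
            = ∑ u, x (u, w₀) := by
          have := sum_upd_nat (fun u => x (u, w₀)) u₁ hu₁
          simpa using this
        have hmem : (ν' + (2 * pstar - p (Sum.inr w₀)) - w (u₁, w₀))
            ∈ dupNuSet w b p pstar Finset.univ := by
          refine ⟨fun e => if e = (u₁, w₀) then x (u₁, w₀) - 1 else x e,
            fun v => if v = Sum.inr w₀ then 1 else y v, ?_, ?_, ?_, ?_, ?_, ?_⟩
          · intro u v _; exact ⟨Finset.mem_univ _, Finset.mem_univ _⟩
          · intro v _; exact ⟨Finset.mem_univ _, Finset.mem_univ _⟩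
          · intro v; by_cases h : v = Sum.inr w₀ <;> simp [h, hy1 v]
          · intro u
            have h2 : (Sum.inl u : U ⊕ V) ≠ Sum.inr w₀ := by simp
            simp only [if_neg h2]
            have hle3 : ∑ v, (if ((u, v) : U × V) = (u₁, w₀) then x (u₁, w₀) - 1 else x (u, v))
                ≤ ∑ v, x (u, v) := by
              apply Finset.sum_le_sum
              intro v _
              by_cases h : ((u, v) : U × V) = (u₁, w₀)
              · rw [if_pos h]; rw [show x (u, v) = x (u₁, w₀) by rw [h]]; omega
              · rw [if_neg h]
            have := hbu u
            omega
          · intro v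
            by_cases h : v = w₀
            · subst h
              beta_reduce; rw [if_pos rfl]
              have heq : ∀ u, (if ((u, v) : U × V) = (u₁, v) then x (u₁, v) - 1 else x (u, v))
                  = (if u = u₁ then x (u₁, v) - 1 else x (u, v)) := by
                intro u; simp [Prod.ext_iff]
              rw [Finset.sum_congr rfl (fun u _ => heq u)]
              omega
            · have h2 : (Sum.inr v : U ⊕ V) ≠ Sum.inr w₀ := by simp [h]
              simp only [if_neg h2]
              have heq : ∀ u, (if ((u, v) : U × V) = (u₁, w₀) then x (u₁, w₀) - 1 else x (u, v))
                  = x (u, v) := by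
                intro u; simp [Prod.ext_iff, h]
              rw [Finset.sum_congr rfl (fun u _ => heq u)]
              exact hbv v
          · have hvx := sum_wupd x w (u₁, w₀) (x (u₁, w₀) - 1)
            have hcast : ((x (u₁, w₀) - 1 : ℕ) : ℝ) = (x (u₁, w₀) : ℝ) - 1 := by
              have h1 : 1 ≤ x (u₁, w₀) := Nat.one_le_iff_ne_zero.mpr hu₁
              push_cast [Nat.cast_sub h1]
              ring
            rw [hcast] at hvx
            have hvy := sum_wupd y (fun v => 2 * pstar - p v) (Sum.inr w₀) 1
            simp only [hy0, Nat.cast_zero, Nat.cast_one] at hvy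
            simp only []
            rw [hvx, hvy]
            linarith [hval]
        have hle2 := hν'.2 hmem
        have h3 := hbddp (Sum.inr w₀)
        have h4 := hbddw (u₁, w₀)
        linarith
  refine ⟨part1, ?_⟩
  -- lower bound: ν + Σ ≤ ν'
  obtain ⟨x₀, _, hx₀u, hx₀v, hx₀val⟩ := hν.1
  have hlowmem : (ν + ∑ v, (2 * pstar - p v)) ∈ dupNuSet w b p pstar Finset.univ := by
    refine ⟨x₀, fun _ => 1, ?_, ?_, ?_, ?_, ?_, ?_⟩
    · intro u v _; exact ⟨Finset.mem_univ _, Finset.mem_univ _⟩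
    · intro v _; exact ⟨Finset.mem_univ _, Finset.mem_univ _⟩
    · intro v; exact le_refl 1
    · intro u
      show (∑ v, x₀ (u, v)) + 1 ≤ b (Sum.inl u) + 1
      have := hx₀u u; omega
    · intro v
      show (∑ u, x₀ (u, v)) + 1 ≤ b (Sum.inr v) + 1
      have := hx₀v v; omega
    · rw [hx₀val]; simp
  have hlow := hν'.2 hlowmem
  -- upper bound
  obtain ⟨x₁, y₁, _, _, hy₁1, hb₁u, hb₁v, hval₁⟩ := hν'.1
  have hall1 := part1 x₁ y₁ hy₁1 hb₁u hb₁v hval₁.symm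
  have hx₁mem : (∑ e, (x₁ e : ℝ) * w e) ∈ bipNuSet w b Finset.univ := by
    refine ⟨x₁, ?_, ?_, ?_, rfl⟩
    · intro u v _; exact ⟨Finset.mem_univ _, Finset.mem_univ _⟩
    · intro u; have := hb₁u u; rw [hall1 (Sum.inl u)] at this; omega
    · intro v; have := hb₁v v; rw [hall1 (Sum.inr v)] at this; omega
  have hhigh := hν.2 hx₁mem
  have hysum : ∑ v, (y₁ v : ℝ) * (2 * pstar - p v) = ∑ v, (2 * pstar - p v) := by
    apply Finset.sum_congr rfl
    intro v _
    rw [hall1 v]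
    simp
  rw [hysum] at hval₁
  linarith
end

section
/- In the duplication construction, if S ⊆ U ∪ V is a coalition of G with p(S) < ν(S), then the coalition S' of G' consisting of all vertices of S together with their partners satisfies p'(S') < ν'(S'), where p' ≡ p* is the uniform allocation. -/
/-- In the duplication construction, if a coalition S of G has
p(S) < ν(S), then the coalition S' of G' consisting of the vertices of S together with
their partners satisfies p'(S') < ν'(S'), where p' ≡ p* is the uniform allocation. -/
theorem stmt14 {U V : Type} [Fintype U] [Fintype V] [Nonempty U] [Nonempty V]
    [DecidableEq U] [DecidableEq V]
    (w : U × V → ℝ) (hw : ∀ e, 0 ≤ w e)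
    (b : U ⊕ V → ℕ) (p : U ⊕ V → ℝ) (hp : ∀ v, 0 ≤ p v)
    (pstar : ℝ) (hpstar : pstar = 1 + max (⨆ v, p v) (⨆ e, w e))
    (ν : Finset (U ⊕ V) → ℝ)
    (ν' : Finset ((U ⊕ V) ⊕ (U ⊕ V)) → ℝ)
    (hν : ∀ S, IsGreatest (bipNuSet w b S) (ν S))
    (hν' : ∀ S', IsGreatest (dupNuSet w b p pstar S') (ν' S'))
    (himp : ∑ v, p v = ν Finset.univ)
    (S : Finset (U ⊕ V)) (hS : ∑ v ∈ S, p v < ν S) :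
    ∑ _a ∈ (S.image Sum.inl ∪ S.image Sum.inr : Finset ((U ⊕ V) ⊕ (U ⊕ V))), pstar <
      ν' (S.image Sum.inl ∪ S.image Sum.inr) := by

  classical
  set S' : Finset ((U ⊕ V) ⊕ (U ⊕ V)) := S.image Sum.inl ∪ S.image Sum.inr with hS'
  obtain ⟨⟨x, hx1, hx2, hx3, hx4⟩, _⟩ := hν S
  have hmemL : ∀ a : U ⊕ V, Sum.inl a ∈ S' ↔ a ∈ S := by
    intro a; simp [hS']
  have hmemR : ∀ a : U ⊕ V, Sum.inr a ∈ S' ↔ a ∈ S := by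
    intro a; simp [hS']
  have hmem : (ν S + ∑ v ∈ S, (2 * pstar - p v)) ∈ dupNuSet w b p pstar S' := by
    refine ⟨x, fun v => if v ∈ S then 1 else 0, ?_, ?_, ?_, ?_, ?_, ?_⟩
    · intro u v h
      obtain ⟨h1, h2⟩ := hx1 u v h
      exact ⟨(hmemL _).mpr h1, (hmemL _).mpr h2⟩
    · intro v h
      have hv : v ∈ S := by by_contra hv; simp [hv] at h
      exact ⟨(hmemL _).mpr hv, (hmemR _).mpr hv⟩
    · intro v; dsimp only; split <;> omega
    · intro u; dsimp only; have := hx2 u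
      have h1 : (if Sum.inl u ∈ S then 1 else 0) ≤ 1 := by split <;> omega
      omega
    · intro v; dsimp only; have := hx3 v
      have h1 : (if Sum.inr v ∈ S then 1 else 0) ≤ 1 := by split <;> omega
      omega
    · rw [hx4]
      congr 1
      simp [apply_ite, ite_mul, Finset.sum_ite_mem]
  have hub := (hν' S').2 hmem
  have hcard : S'.card = 2 * S.card := by
    rw [hS', Finset.card_union_of_disjoint, Finset.card_image_of_injective _ Sum.inl_injective,
      Finset.card_image_of_injective _ Sum.inr_injective]
    · ring
    · simp [Finset.disjoint_left]
  have hsum : ∑ v ∈ S, (2 * pstar - p v) = 2 * S.card * pstar - ∑ v ∈ S, p v := by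
    rw [Finset.sum_sub_distrib, Finset.sum_const]
    push_cast; ring
  rw [Finset.sum_const, hcard] at *
  have : (2 * S.card : ℕ) • pstar = 2 * S.card * pstar := by push_cast [nsmul_eq_mul]; ring
  rw [this]
  linarith [hub, hS, hsum.symm ▸ hub]
end

section
/- For a monotone cooperative game ν with the property that for every agent i and every coalition S containing i, ν(S) − ν(S \ {i}) ≥ ν(N) − ν(N \ {i}), any imputation with p(i) ≤ ν(N) − ν(N \ {i}) for all agents i ≠ u (where u is a fixed agent appearing in all relevant coalitions) satisfies p(S) ≥ ν(S) for all coalitions S containing u. -/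
/-- For a monotone cooperative game ν with ν(∅) = 0 in which the marginal
contribution of any agent to any coalition containing it is at least its marginal
contribution to the grand coalition, any imputation p with
p(i) ≤ ν(N) − ν(N \ {i}) for all agents i ≠ u (u a fixed agent) satisfies
p(S) ≥ ν(S) for all coalitions S containing u. -/
theorem stmt18 {N : Type} [Fintype N] [DecidableEq N] (ν : Finset N → ℝ)
    (hν0 : ν ∅ = 0) (hνnn : ∀ S, 0 ≤ ν S)
    (hmono : ∀ S T : Finset N, S ⊆ T → ν S ≤ ν T)
    (hmarg : ∀ (i : N) (S : Finset N), i ∈ S →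
      ν Finset.univ - ν (Finset.univ.erase i) ≤ ν S - ν (S.erase i))
    (p : N → ℝ) (hp : ∀ i, 0 ≤ p i) (himp : ∑ i, p i = ν Finset.univ)
    (u : N) (hpu : ∀ i : N, i ≠ u → p i ≤ ν Finset.univ - ν (Finset.univ.erase i)) :
    ∀ S : Finset N, u ∈ S → ν S ≤ ∑ i ∈ S, p i := by
  have key : ∀ C : Finset N,
      ν (Finset.univ \ C) ≤
        ν Finset.univ - ∑ i ∈ C, (ν Finset.univ - ν (Finset.univ.erase i)) := by
    intro C
    induction C using Finset.induction with
    | empty => simp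
    | @insert i C hiC ih =>
      have hmem : i ∈ Finset.univ \ C := by simp [hiC]
      have h1 := hmarg i (Finset.univ \ C) hmem
      have herase : (Finset.univ \ C).erase i = Finset.univ \ insert i C := by
        ext x; simp [Finset.mem_erase, and_comm, not_or]
      rw [Finset.sum_insert hiC]
      rw [herase] at h1
      linarith
  intro S huS
  have hC : Finset.univ \ Sᶜ = S := by simp
  have h1 := key Sᶜ
  rw [hC] at h1
  have h2 : ∑ i ∈ Sᶜ, p i ≤ ∑ i ∈ Sᶜ, (ν Finset.univ - ν (Finset.univ.erase i)) := by
    apply Finset.sum_le_sum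
    intro i hi
    exact hpu i (fun h => by simp [h] at hi; exact hi huS)
  have hsplit : ∑ i ∈ S, p i + ∑ i ∈ Sᶜ, p i = ν Finset.univ := by
    rw [← himp, Finset.sum_add_sum_compl]
  linarith
end
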